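/- Let y ∈ ℝ^n be dominant and let x ∈ ℝ^n. Then r(x) = y if and only if: S_i(x) ≤ S_i(y) for every i ∈ {1,…,n−1} with y_i = y_{i+1}, S_i(x) = S_i(y) for every i ∈ {1,…,n−1} with y_i > y_{i+1}, and S_n(x) = S_n(y). -/

import Mathlib

/-! The closest point `y = r x` of the convex cone `C` is characterised by the variational
inequality `⟪x - y, c - y⟫ ≤ 0` for all `c ∈ C`. Testing it against `c = y + t • 1_{[1,k]}`,
which stays dominant for `t ≥ 0`, for all `t` when `k = n`, and for `t = y_{k+1} - y_k`, yields the
conditions on `S_k(x - y)`. Conversely, summation by parts writes `⟪x - y, c - y⟫` as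
`(c - y)_n S_n(x - y) - ∑_k ((c - y)_{k+1} - (c - y)_k) S_k(x - y)`, and the conditions make every
term of the sum nonnegative, since `(c - y)_{k+1} ≤ (c - y)_k` wherever `y_k = y_{k+1}`. -/

/-- The dominant cone `C = {x ∈ ℝⁿ : x₁ ≥ x₂ ≥ ⋯ ≥ xₙ}`. -/
def domCone (n : ℕ) : Set (EuclideanSpace ℝ (Fin n)) :=
  {x | ∀ i j : Fin n, i ≤ j → x j ≤ x i}

/-- `r` is the map sending each point of `ℝⁿ` to the (unique) closest point
of the dominant cone. -/
def IsClosestPointMap (n : ℕ)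
    (r : EuclideanSpace ℝ (Fin n) → EuclideanSpace ℝ (Fin n)) : Prop :=
  ∀ x, r x ∈ domCone n ∧ ∀ c ∈ domCone n, dist x (r x) ≤ dist x c

/-- `S_k(x) = x₁ + ⋯ + x_k`, the sum of the first `k` coordinates. -/
def psum {n : ℕ} (x : Fin n → ℝ) (k : ℕ) : ℝ :=
  ∑ j ∈ Finset.univ.filter (fun j : Fin n => (j : ℕ) < k), x j

open Finset RealInnerProductSpace

section ClosestPoint

variable {E : Type*} [NormedAddCommGroup E] [InnerProductSpace ℝ E]

theorem Convex.inner_sub_nonpos_of_forall_dist_le {K : Set E} (hK : Convex ℝ K) {x v : E}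
    (hv : v ∈ K) (hmin : ∀ w ∈ K, dist x v ≤ dist x w) : ∀ w ∈ K, ⟪x - v, w - v⟫ ≤ 0 := by
  have : Nonempty K := ⟨⟨v, hv⟩⟩
  refine (norm_eq_iInf_iff_real_inner_le_zero hK hv).1 (le_antisymm ?_ ?_)
  · exact le_ciInf fun w => by simpa only [dist_eq_norm] using hmin w w.2
  · exact ciInf_le ⟨0, Set.forall_mem_range.2 fun _ => norm_nonneg _⟩ (⟨v, hv⟩ : K)

theorem eq_of_inner_sub_nonpos {x v w : E} (hv : ⟪x - v, w - v⟫ ≤ 0)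
    (hw : ⟪x - w, v - w⟫ ≤ 0) : v = w := by
  have hsum : ⟪x - v, w - v⟫ + ⟪x - w, v - w⟫ = ⟪w - v, w - v⟫ := by
    rw [← neg_sub w v, inner_neg_right, ← sub_eq_add_neg, ← inner_sub_left, sub_sub_sub_cancel_left]
  have : ⟪w - v, w - v⟫ ≤ 0 := hsum ▸ add_nonpos hv hw
  exact (sub_eq_zero.1 (real_inner_self_nonpos.1 this)).symm

end ClosestPoint

section DominantCone

variable {n : ℕ}

theorem convex_domCone (n : ℕ) : Convex ℝ (domCone n) := by
  intro a ha b hb s t hs ht _ i j hij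
  simp only [PiLp.add_apply, PiLp.smul_apply, smul_eq_mul]
  gcongr
  exacts [ha i j hij, hb i j hij]

theorem IsClosestPointMap.apply_eq_iff {r : EuclideanSpace ℝ (Fin n) → EuclideanSpace ℝ (Fin n)}
    (hr : IsClosestPointMap n r) {y : EuclideanSpace ℝ (Fin n)} (hy : y ∈ domCone n)
    (x : EuclideanSpace ℝ (Fin n)) :
    r x = y ↔ ∀ c ∈ domCone n, ⟪x - y, c - y⟫ ≤ 0 := by
  have hrx := (convex_domCone n).inner_sub_nonpos_of_forall_dist_le (hr x).1 (hr x).2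
  refine ⟨fun h => h ▸ hrx, fun h => eq_of_inner_sub_nonpos (hrx y hy) (h _ (hr x).1)⟩

theorem psum_sub (x y : Fin n → ℝ) (k : ℕ) :
    psum (x - y) k = psum x k - psum y k := by
  simp [psum, sum_sub_distrib]

def prefixIndicator (n k : ℕ) : EuclideanSpace ℝ (Fin n) :=
  WithLp.toLp 2 fun j : Fin n => if (j : ℕ) < k then 1 else 0

theorem inner_prefixIndicator (z : EuclideanSpace ℝ (Fin n)) (k : ℕ) :
    ⟪z, prefixIndicator n k⟫ = psum z k := by
  simp [prefixIndicator, PiLp.inner_apply, psum, sum_filter]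

theorem add_smul_prefixIndicator_mem {y : EuclideanSpace ℝ (Fin n)} (hy : y ∈ domCone n)
    {k : ℕ} {t : ℝ} (h : ∀ i j : Fin n, (i : ℕ) < k → k ≤ (j : ℕ) → y j ≤ y i + t) :
    y + t • prefixIndicator n k ∈ domCone n := by
  intro i j hij
  have hij' : (i : ℕ) ≤ j := hij
  simp only [PiLp.add_apply, PiLp.smul_apply, smul_eq_mul, prefixIndicator]
  by_cases hik : (i : ℕ) < k <;> by_cases hjk : (j : ℕ) < k
  · simpa [hik, hjk] using hy i j hij
  · simpa [hik, hjk] using h i j hik (not_lt.1 hjk)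
  · omega
  · simpa [hik, hjk] using hy i j hij

def zeroExt (x : Fin n → ℝ) (j : ℕ) : ℝ :=
  if h : j < n then x ⟨j, h⟩ else 0

@[simp]
theorem zeroExt_val (x : Fin n → ℝ) (i : Fin n) : zeroExt x i = x i := by
  simp [zeroExt]

theorem psum_eq_sum_range (x : Fin n → ℝ) (k : ℕ) : psum x k = ∑ j ∈ range k, zeroExt x j := by
  have hzero : ∀ j ∈ range k, ¬ j < n → zeroExt x j = 0 := fun j _ hj => dif_neg hj
  rw [← sum_filter_of_ne fun j hj h => by_contra fun hjn => h (hzero j hj hjn), psum, sum_filter]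
  simp_rw [← zeroExt_val x]
  rw [Fin.sum_univ_eq_sum_range (fun j => if j < k then zeroExt x j else 0), ← sum_filter]
  congr 1
  ext j
  simp only [mem_filter, mem_range]
  omega

-- Indices are 0-based: `zeroExt d i` is the coordinate `d_{i+1}`, and `n - 1` is the last index.
theorem inner_eq_sum_by_parts (z d : EuclideanSpace ℝ (Fin n)) :
    ⟪z, d⟫ = zeroExt d (n - 1) * psum z n
      - ∑ i ∈ range (n - 1), (zeroExt d (i + 1) - zeroExt d i) * psum z (i + 1) := by
  have hinner : ⟪z, d⟫ = ∑ j ∈ range n, zeroExt d j * zeroExt z j := by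
    simp_rw [PiLp.inner_apply, RCLike.inner_apply, conj_trivial, ← zeroExt_val d, ← zeroExt_val z]
    exact Fin.sum_univ_eq_sum_range (fun j => zeroExt d j * zeroExt z j) n
  simpa only [← hinner, smul_eq_mul, ← psum_eq_sum_range] using
    sum_range_by_parts (zeroExt d) (zeroExt z) n

theorem psum_conditions_of_forall_inner_nonpos {x y : EuclideanSpace ℝ (Fin n)}
    (hy : y ∈ domCone n) (hVI : ∀ c ∈ domCone n, ⟪x - y, c - y⟫ ≤ 0) :
    (∀ i : ℕ, 1 ≤ i → ∀ h2 : i < n,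
        y ⟨i - 1, (i.sub_le 1).trans_lt h2⟩ = y ⟨i, h2⟩ → psum x i ≤ psum y i) ∧
      (∀ i : ℕ, 1 ≤ i → ∀ h2 : i < n,
        y ⟨i, h2⟩ < y ⟨i - 1, (i.sub_le 1).trans_lt h2⟩ → psum x i = psum y i) ∧
      psum x n = psum y n := by
  have htest (k : ℕ) (t : ℝ) (h : ∀ i j : Fin n, (i : ℕ) < k → k ≤ (j : ℕ) → y j ≤ y i + t) :
      t * (psum x k - psum y k) ≤ 0 := by
    simpa [inner_smul_right, inner_prefixIndicator, psum_sub] using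
      hVI _ (add_smul_prefixIndicator_mem hy h)
  have hle (k : ℕ) : psum x k ≤ psum y k := by
    have := htest k 1 fun i j hi hj => by linarith [hy i j (by rw [Fin.le_def]; omega)]
    linarith
  have hge : psum y n ≤ psum x n := by
    have := htest n (-1) fun i j _ hj => absurd j.isLt (by omega)
    linarith
  refine ⟨fun i _ _ _ => hle i, fun i _ h2 hlt => le_antisymm (hle i) ?_, le_antisymm (hle n) hge⟩
  have := htest i (y ⟨i, h2⟩ - y ⟨i - 1, (i.sub_le 1).trans_lt h2⟩) fun a b ha hb => by
    linarith [hy ⟨i, h2⟩ b (by rw [Fin.le_def]; exact hb),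
      hy a ⟨i - 1, (i.sub_le 1).trans_lt h2⟩ (by rw [Fin.le_def]; simp only; omega)]
  exact sub_nonneg.1 (nonneg_of_mul_nonpos_right this (sub_neg.2 hlt))

theorem forall_inner_nonpos_of_psum_conditions {x y : EuclideanSpace ℝ (Fin n)}
    (hy : y ∈ domCone n)
    (hflat : ∀ i : ℕ, 1 ≤ i → ∀ h2 : i < n,
        y ⟨i - 1, (i.sub_le 1).trans_lt h2⟩ = y ⟨i, h2⟩ → psum x i ≤ psum y i)
    (hstrict : ∀ i : ℕ, 1 ≤ i → ∀ h2 : i < n,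
        y ⟨i, h2⟩ < y ⟨i - 1, (i.sub_le 1).trans_lt h2⟩ → psum x i = psum y i)
    (htotal : psum x n = psum y n) :
    ∀ c ∈ domCone n, ⟪x - y, c - y⟫ ≤ 0 := by
  intro c hc
  simp only [inner_eq_sum_by_parts, WithLp.ofLp_sub, psum_sub]
  rw [htotal, sub_self, mul_zero, zero_sub, neg_nonpos]
  refine sum_nonneg fun i hi => ?_
  have hi1 : i + 1 < n := by rw [mem_range] at hi; omega
  rcases (hy ⟨i, by omega⟩ ⟨i + 1, hi1⟩ (by simp [Fin.le_def])).lt_or_eq with hlt | heq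
  · rw [hstrict (i + 1) (by omega) hi1 (by simpa using hlt), sub_self, mul_zero]
  · have hS := hflat (i + 1) (by omega) hi1 (by simpa using heq.symm)
    have hd : zeroExt (⇑c - ⇑y) (i + 1) - zeroExt (⇑c - ⇑y) i ≤ 0 := by
      simp only [zeroExt, hi1, dif_pos, (by omega : i < n), Pi.sub_apply, heq]
      linarith [hc ⟨i, by omega⟩ ⟨i + 1, hi1⟩ (by simp [Fin.le_def])]
    exact mul_nonneg_of_nonpos_of_nonpos hd (sub_nonpos.2 hS)

end DominantCone

/-- The coordinate description of the fibers of `r` (Proposition 1.1(2) /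
Proposition 1.2(3) for `GL_n`): for dominant `y`, `r x = y` iff
`S_i(x) ≤ S_i(y)` whenever `y_i = y_{i+1}`, `S_i(x) = S_i(y)` whenever
`y_i > y_{i+1}` (`1 ≤ i ≤ n-1`), and `S_n(x) = S_n(y)`. -/
theorem stmt_2 (n : ℕ)
    (r : EuclideanSpace ℝ (Fin n) → EuclideanSpace ℝ (Fin n))
    (hr : IsClosestPointMap n r)
    (y : EuclideanSpace ℝ (Fin n)) (hy : y ∈ domCone n)
    (x : EuclideanSpace ℝ (Fin n)) :
    r x = y ↔
      ((∀ i : ℕ, ∀ h1 : 1 ≤ i, ∀ h2 : i < n,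
          y ⟨i - 1, by omega⟩ = y ⟨i, h2⟩ → psum x i ≤ psum y i) ∧
       (∀ i : ℕ, ∀ h1 : 1 ≤ i, ∀ h2 : i < n,
          y ⟨i, h2⟩ < y ⟨i - 1, by omega⟩ → psum x i = psum y i) ∧
       psum x n = psum y n) := by
  rw [hr.apply_eq_iff hy x]
  exact ⟨psum_conditions_of_forall_inner_nonpos hy,
    fun ⟨hflat, hstrict, htotal⟩ => forall_inner_nonpos_of_psum_conditions hy hflat hstrict htotal⟩
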